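/- arXiv:2506.21259 — 2 statements merged into one kernel-verified Lean document; each statement's English description precedes it below -/
import Mathlib

section
/- Let G be a finite group acting on the regular representation ρ = ℝ[G], and let H < K ≤ G with H proper in K. Write γ(s) = Σ_{h∈H} χ_h + (1−s)·Σ_{k∈K∖H} χ_k for 0 < s ≤ 1. Then: (a) every g ∈ H fixes γ(s); (b) no g ∈ K∖H fixes γ(s); (c) no g ∈ G∖K fixes γ(s), since the action of such g produces a basis vector χ_{g'} with g' ∉ K appearing with nonzero coefficient. -/
/-- The left regular representation of `G` on `G → ℝ`. -/
instance regularSMul (G : Type*) [Group G] : SMul G (G → ℝ) :=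
  ⟨fun g v a => v (g⁻¹ * a)⟩

instance regularMulAction (G : Type*) [Group G] : MulAction G (G → ℝ) where
  one_smul v := funext fun a => by
    show v (1⁻¹ * a) = v a
    simp
  mul_smul g h v := funext fun a => by
    show v ((g * h)⁻¹ * a) = v (h⁻¹ * (g⁻¹ * a))
    simp [mul_assoc]

/-- Let `H < K ≤ G`, `0 < s ≤ 1`, and `γ s = ∑_{h∈H} χ_h + (1-s)·∑_{k∈K∖H} χ_k`
in the regular representation.  Then (a) every `g ∈ H` fixes `γ s`; (b) no
`g ∈ K ∖ H` fixes `γ s`; (c) no `g ∉ K` fixes `γ s`, and indeed the action of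
such a `g` produces a basis vector `χ_a` with `a ∉ K` having nonzero
coefficient. -/
theorem isotropy_path_regular_rep {G : Type*} [Group G] [Finite G]
    (H K : Subgroup G) (hHK : H < K) (s : ℝ) (hs : 0 < s) (hs1 : s ≤ 1) :
    let γ : G → ℝ := fun a =>
      (H : Set G).indicator (fun _ => (1 : ℝ)) a +
        (1 - s) * ((K : Set G) \ (H : Set G)).indicator (fun _ => (1 : ℝ)) a
    (∀ g ∈ H, g • γ = γ) ∧
      (∀ g ∈ K, g ∉ H → g • γ ≠ γ) ∧
      (∀ g : G, g ∉ K → g • γ ≠ γ ∧ ∃ a : G, a ∉ K ∧ (g • γ) a ≠ 0) := by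
  intro γ
  classical
  have hsmul : ∀ (g : G) (a : G), (g • γ) a = γ (g⁻¹ * a) := fun _ _ => rfl
  have hval : ∀ a : G, γ a = if a ∈ H then 1 else if a ∈ K then 1 - s else 0 := by
    intro a
    by_cases hH : a ∈ H <;> by_cases hK : a ∈ K <;>
      simp_all [γ, Set.indicator, hH, hK]
  refine ⟨?_, ?_, ?_⟩
  · intro g hg
    funext a
    rw [hsmul, hval, hval]
    have h1 : g⁻¹ * a ∈ H ↔ a ∈ H := by
      constructor
      · intro h; simpa using mul_mem hg h
      · intro h; exact mul_mem (inv_mem hg) h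
    have h2 : g⁻¹ * a ∈ K ↔ a ∈ K := by
      constructor
      · intro h; simpa using mul_mem (hHK.le hg) h
      · intro h; exact mul_mem (inv_mem (hHK.le hg)) h
    simp [h1, h2]
  · intro g hgK hgH heq
    have := congrFun heq g
    rw [hsmul, hval, hval] at this
    simp [hgK, hgH, one_mem] at this
    linarith
  · intro g hgK
    have hgH : g ∉ H := fun h => hgK (hHK.le h)
    have h1 : (g • γ) g = 1 := by
      rw [hsmul, hval]; simp [one_mem]
    constructor
    · intro heq
      have := congrFun heq g
      rw [h1, hval] at this
      simp [hgK, hgH] at this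
    · exact ⟨g, hgK, by rw [h1]; norm_num⟩
end

section
/- Let G be a group acting on sets X and Y and let A be a set. There is a natural bijection between isovariant maps A × X → Y (with trivial G-action on A, diagonal action on A × X) and isovariant maps X → Y^A_{const}, where Y^A_{const} is the set of functions φ : A → Y with constant isotropy (G_{φ(a)} = G_{φ(a')} for all a, a' ∈ A), with G acting pointwise on functions. -/
section Aux

variable {G A X Y : Type*} [Group G] [MulAction G A] [MulAction G X] [MulAction G Y]

lemma stab_prod_eq (htriv : ∀ (g : G) (a : A), g • a = a) (a : A) (x : X) :
    MulAction.stabilizer G (a, x) = MulAction.stabilizer G x := by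
  ext g
  simp [MulAction.mem_stabilizer_iff, Prod.ext_iff, htriv]

lemma stab_pi_eq (φ : A → Y)
    (h : ∀ a a' : A, MulAction.stabilizer G (φ a) = MulAction.stabilizer G (φ a'))
    (a : A) : MulAction.stabilizer G φ = MulAction.stabilizer G (φ a) := by
  ext g
  simp only [MulAction.mem_stabilizer_iff]
  constructor
  · intro hg
    have := congrFun hg a
    simpa using this
  · intro hg
    funext b
    have : g ∈ MulAction.stabilizer G (φ b) := by
      rw [h b a]; exact hg
    simpa using this

end Aux

/-- Currying gives a natural bijection between isovariant maps `A × X → Y`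
(trivial action on `A`, diagonal action on the product) and isovariant maps
`X → Y^A_const`, where `Y^A_const` is the set of functions `A → Y` with
constant isotropy, carrying the pointwise `G`-action. -/
theorem isovariant_currying_bijection {G A X Y : Type*} [Group G] [Nonempty A]
    [MulAction G A] [MulAction G X] [MulAction G Y]
    (htriv : ∀ (g : G) (a : A), g • a = a) :
    ∃ e :
      {F : A × X → Y //
        (∀ (g : G) (p : A × X), F (g • p) = g • F p) ∧
        ∀ p : A × X, MulAction.stabilizer G p = MulAction.stabilizer G (F p)} ≃
      {f : X → {φ : A → Y //
          ∀ a a' : A, MulAction.stabilizer G (φ a) = MulAction.stabilizer G (φ a')} //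
        (∀ (g : G) (x : X), (f (g • x)).val = g • (f x).val) ∧
        ∀ x : X, MulAction.stabilizer G x = MulAction.stabilizer G (f x).val},
      ∀ (F) (x : X) (a : A), ((e F).val x).val a = F.val (a, x) := by
  refine ⟨⟨
    fun F => ⟨fun x => ⟨fun a => F.val (a, x), fun a a' => by
      rw [← F.prop.2 (a, x), ← F.prop.2 (a', x), stab_prod_eq htriv, stab_prod_eq htriv]⟩,
      by
        constructor
        · intro g x
          funext a
          have := F.prop.1 g (a, x)
          simp only [Prod.smul_mk, htriv] at this
          simpa using this
        · intro x
          have ha : ∀ a : A, MulAction.stabilizer G x = MulAction.stabilizer G (F.val (a, x)) := by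
            intro a
            rw [← F.prop.2 (a, x), stab_prod_eq htriv]
          obtain ⟨a⟩ := ‹Nonempty A›
          rw [stab_pi_eq (fun a => F.val (a, x)) (fun a a' => (ha a).symm.trans (ha a')) a]
          exact ha a⟩,
    fun f => ⟨fun p => (f.val p.2).val p.1,
      by
        constructor
        · intro g p
          simp only [Prod.smul_fst, Prod.smul_snd, htriv]
          rw [f.prop.1 g p.2]
          simp
        · intro p
          rw [stab_prod_eq htriv, f.prop.2 p.2,
            stab_pi_eq (f.val p.2).val (f.val p.2).prop p.1]⟩,
    fun F => by ext p; rfl,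
    fun f => by
      ext x a
      · rfl⟩,
    fun F x a => rfl⟩
end
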